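/- Fourth-order compact approximation of the nonlinear convection term: let g : ℝ × ℝ → ℝ be 5-times continuously differentiable, fix (x₀, y₀) ∈ ℝ², and set G(x,y) = ∂²g/∂x²(x,y), H(x,y) = ∂²g/∂y²(x,y). For h > 0 define the centered differences at (x₀,y₀): δ̂ₓʰ f = (f(x₀+h, y₀) − f(x₀−h, y₀))/(2h), δ̂ᵧʰ f = (f(x₀, y₀+h) − f(x₀, y₀−h))/(2h), δ̂ₕʰ f = δ̂ₓʰ f + δ̂ᵧʰ f, and the compact combinations ψₕʰ(g,g) = (1/3)·(g(x₀,y₀)·δ̂ₕʰ g + δ̂ₕʰ(g·g)), ψₓʰ(G,g) = (1/3)·(G(x₀,y₀)·δ̂ₓʰ g + δ̂ₓʰ(G·g)), ψᵧʰ(H,g) = (1/3)·(H(x₀,y₀)·δ̂ᵧʰ g + δ̂ᵧʰ(H·g)), where products are pointwise. Then the function h ↦ g(x₀,y₀)·(∂g/∂x(x₀,y₀) + ∂g/∂y(x₀,y₀)) − ψₕʰ(g,g) + (h²/2)·(ψₓʰ(G,g) + ψᵧʰ(H,g)) is big-O of h⁴ as h → 0 from the right (Asymptotics.IsBigO along nhdsWithin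 0 (Set.Ioi 0) with comparison function h ↦ h⁴). -/

import Mathlib

open Real Asymptotics

/-- Partial derivative in the `x`-direction. -/
noncomputable def partialx (g : ℝ × ℝ → ℝ) (p : ℝ × ℝ) : ℝ :=
  fderiv ℝ g p (1, 0)

/-- Partial derivative in the `y`-direction. -/
noncomputable def partialy (g : ℝ × ℝ → ℝ) (p : ℝ × ℝ) : ℝ :=
  fderiv ℝ g p (0, 1)

/-- Centered difference in `x` at `(x₀, y₀)` with step `h`. -/
noncomputable def cdx (x₀ y₀ h : ℝ) (f : ℝ × ℝ → ℝ) : ℝ :=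
  (f (x₀ + h, y₀) - f (x₀ - h, y₀)) / (2 * h)

/-- Centered difference in `y` at `(x₀, y₀)` with step `h`. -/
noncomputable def cdy (x₀ y₀ h : ℝ) (f : ℝ × ℝ → ℝ) : ℝ :=
  (f (x₀, y₀ + h) - f (x₀, y₀ - h)) / (2 * h)

/-- Combined centered difference `δ̂h = δ̂x + δ̂y`. -/
noncomputable def cdh (x₀ y₀ h : ℝ) (f : ℝ × ℝ → ℝ) : ℝ :=
  cdx x₀ y₀ h f + cdy x₀ y₀ h f

open Topology Set Filter

lemma itdw_eq {f : ℝ → ℝ} {N : ℕ} (hf : ContDiff ℝ (N:ℕ) f) {k : ℕ} (hk : k ≤ N) {x : ℝ}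
    (hx : x ∈ Set.Icc (0:ℝ) 1) :
    iteratedDerivWithin k f (Set.Icc 0 1) x = iteratedDeriv k f x := by
  rw [iteratedDerivWithin_eq_iteratedFDerivWithin, iteratedDeriv_eq_iteratedFDeriv]
  congr 1
  have h1 : HasFTaylorSeriesUpTo (N:ℕ∞) f (ftaylorSeries ℝ f) :=
    contDiff_iff_ftaylorSeries.mp (by exact_mod_cast hf)
  exact ((h1.hasFTaylorSeriesUpToOn _).eq_iteratedFDerivWithin_of_uniqueDiffOn
    (by exact_mod_cast hk) (uniqueDiffOn_Icc one_pos) hx).symm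

lemma taylor_isBigO (n : ℕ) (f : ℝ → ℝ) (hf : ContDiff ℝ (n+1 : ℕ) f) :
    (fun h : ℝ => f h - ∑ k ∈ Finset.range (n+1),
        ((k.factorial : ℝ))⁻¹ * h ^ k * iteratedDeriv k f 0)
      =O[𝓝[>] (0:ℝ)] fun h => h ^ (n+1) := by
  obtain ⟨C, hC⟩ := (isCompact_Icc (a := (0:ℝ)) (b := 1)).exists_bound_of_continuousOn
    ((hf.continuous_iteratedDeriv (n+1) (by exact_mod_cast le_rfl)).continuousOn)
  rw [isBigO_iff]
  refine ⟨C / n.factorial, ?_⟩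
  filter_upwards [Ioc_mem_nhdsGT_of_mem (by norm_num : (0:ℝ) ∈ Set.Ico 0 1)] with h hh
  have hmem : h ∈ Set.Icc (0:ℝ) 1 := ⟨hh.1.le, hh.2⟩
  have key := taylor_mean_remainder_bound (f := f) (a := 0) (b := 1) (x := h) (n := n)
    zero_le_one (hf.contDiffOn) hmem
    (fun y hy => by rw [itdw_eq hf le_rfl hy]; exact hC y hy)
  rw [taylor_within_apply] at key
  have hsum : ∑ k ∈ Finset.range (n+1),
      (((k.factorial:ℝ))⁻¹ * (h - 0) ^ k) • iteratedDerivWithin k f (Set.Icc 0 1) 0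
      = ∑ k ∈ Finset.range (n+1), ((k.factorial : ℝ))⁻¹ * h ^ k * iteratedDeriv k f 0 := by
    refine Finset.sum_congr rfl fun k hk => ?_
    have hk' := Finset.mem_range.mp hk
    rw [itdw_eq hf (by omega : k ≤ n+1) (by norm_num)]
    simp only [smul_eq_mul, sub_zero]
  rw [hsum, sub_zero] at key
  calc ‖f h - ∑ k ∈ Finset.range (n+1), ((k.factorial : ℝ))⁻¹ * h ^ k * iteratedDeriv k f 0‖
      ≤ C * h ^ (n+1) / n.factorial := key
    _ = C / n.factorial * ‖h ^ (n+1)‖ := by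
        rw [Real.norm_eq_abs, abs_of_nonneg (pow_nonneg hh.1.le _)]; ring

lemma pow_isBigO_pow {m n : ℕ} (hmn : n ≤ m) :
    (fun h : ℝ => h ^ m) =O[𝓝[>] (0:ℝ)] fun h => h ^ n := by
  rw [isBigO_iff]
  refine ⟨1, ?_⟩
  filter_upwards [Ioc_mem_nhdsGT_of_mem (by norm_num : (0:ℝ) ∈ Set.Ico 0 1)] with h hh
  rw [one_mul, Real.norm_eq_abs, Real.norm_eq_abs, abs_of_nonneg (pow_nonneg hh.1.le _),
    abs_of_nonneg (pow_nonneg hh.1.le _)]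
  exact pow_le_pow_of_le_one hh.1.le hh.2 hmn

/-- centered difference 4th order expansion -/
lemma cd5 (f : ℝ → ℝ) (hf : ContDiff ℝ (5:ℕ) f) :
    (fun h : ℝ => (f h - f (-h)) / (2*h) - deriv f 0 - h^2/6 * iteratedDeriv 3 f 0)
      =O[𝓝[>] (0:ℝ)] fun h => h ^ 4 := by
  have hneg : ContDiff ℝ ((5:ℕ)) (fun t : ℝ => f (-t)) := hf.comp contDiff_neg
  have h1 := taylor_isBigO 4 f hf
  have h2 := taylor_isBigO 4 (fun t : ℝ => f (-t)) hneg
  have hkey : (fun h : ℝ => (f h - f (-h)) - (2*h*deriv f 0 + h^3/3 * iteratedDeriv 3 f 0))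
      =O[𝓝[>] (0:ℝ)] fun h => h ^ 5 := by
    have := h1.sub h2
    refine this.congr' (Filter.Eventually.of_forall fun h => ?_) (by simp)
    have e : ∀ k, iteratedDeriv k (fun t : ℝ => f (-t)) 0 = (-1:ℝ)^k * iteratedDeriv k f 0 := by
      intro k; rw [iteratedDeriv_comp_neg]; simp [smul_eq_mul]
    simp only [Finset.sum_range_succ, Finset.sum_range_zero, e]
    rw [iteratedDeriv_one]
    norm_num [Nat.factorial]
    ring
  have hmul := hkey.mul (isBigO_refl (fun h : ℝ => 1/(2*h)) (𝓝[>] (0:ℝ)))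
  have e2 : (fun h : ℝ => (f h - f (-h)) / (2*h) - deriv f 0 - h^2/6 * iteratedDeriv 3 f 0)
      =ᶠ[𝓝[>] (0:ℝ)] fun h => ((f h - f (-h)) - (2*h*deriv f 0 + h^3/3 * iteratedDeriv 3 f 0))
        * (1/(2*h)) := by
    filter_upwards [self_mem_nhdsWithin] with h (hh : h ∈ Set.Ioi (0:ℝ))
    have : h ≠ 0 := ne_of_gt hh
    field_simp
    try ring
  have e3 : (fun h : ℝ => h^5 * (1/(2*h))) =ᶠ[𝓝[>] (0:ℝ)] fun h => 1/2 * h^4 := by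
    filter_upwards [self_mem_nhdsWithin] with h (hh : h ∈ Set.Ioi (0:ℝ))
    have : h ≠ 0 := ne_of_gt hh
    field_simp
  exact (hmul.congr' e2.symm e3).trans (isBigO_const_mul_self (1/2) _ _)

/-- centered difference 2nd order expansion -/
lemma cd3 (f : ℝ → ℝ) (hf : ContDiff ℝ (3:ℕ) f) :
    (fun h : ℝ => (f h - f (-h)) / (2*h) - deriv f 0)
      =O[𝓝[>] (0:ℝ)] fun h => h ^ 2 := by
  have hneg : ContDiff ℝ ((3:ℕ)) (fun t : ℝ => f (-t)) := hf.comp contDiff_neg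
  have h1 := taylor_isBigO 2 f hf
  have h2 := taylor_isBigO 2 (fun t : ℝ => f (-t)) hneg
  have hkey : (fun h : ℝ => (f h - f (-h)) - 2*h*deriv f 0)
      =O[𝓝[>] (0:ℝ)] fun h => h ^ 3 := by
    have := h1.sub h2
    refine this.congr' (Filter.Eventually.of_forall fun h => ?_) (by simp)
    have e : ∀ k, iteratedDeriv k (fun t : ℝ => f (-t)) 0 = (-1:ℝ)^k * iteratedDeriv k f 0 := by
      intro k; rw [iteratedDeriv_comp_neg]; simp [smul_eq_mul]
    simp only [Finset.sum_range_succ, Finset.sum_range_zero, e]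
    rw [iteratedDeriv_one]
    norm_num [Nat.factorial]
    ring
  have hmul := hkey.mul (isBigO_refl (fun h : ℝ => 1/(2*h)) (𝓝[>] (0:ℝ)))
  have e2 : (fun h : ℝ => (f h - f (-h)) / (2*h) - deriv f 0)
      =ᶠ[𝓝[>] (0:ℝ)] fun h => ((f h - f (-h)) - 2*h*deriv f 0) * (1/(2*h)) := by
    filter_upwards [self_mem_nhdsWithin] with h (hh : h ∈ Set.Ioi (0:ℝ))
    have : h ≠ 0 := ne_of_gt hh
    field_simp
    try ring
  have e3 : (fun h : ℝ => h^3 * (1/(2*h))) =ᶠ[𝓝[>] (0:ℝ)] fun h => 1/2 * h^2 := by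
    filter_upwards [self_mem_nhdsWithin] with h (hh : h ∈ Set.Ioi (0:ℝ))
    have : h ≠ 0 := ne_of_gt hh
    field_simp
  exact (hmul.congr' e2.symm e3).trans (isBigO_const_mul_self (1/2) _ _)

lemma onedim (u : ℝ → ℝ) (hu : ContDiff ℝ (5:ℕ) u) :
    (fun h : ℝ => u 0 * deriv u 0
        - 1/3 * (u 0 * ((u h - u (-h)) / (2*h)) + (u h * u h - u (-h) * u (-h)) / (2*h))
        + h^2/2 * (1/3 * (deriv (deriv u) 0 * ((u h - u (-h)) / (2*h))
            + (deriv (deriv u) h * u h - deriv (deriv u) (-h) * u (-h)) / (2*h))))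
      =O[𝓝[>] (0:ℝ)] fun h => h ^ 4 := by
  have hd1 : ContDiff ℝ (4:ℕ) (deriv u) := by
    have : ContDiff ℝ ((4:ℕ)+1 : WithTop ℕ∞) u := by norm_num; exact_mod_cast hu
    exact (contDiff_succ_iff_deriv.mp this).2.2
  have hd2 : ContDiff ℝ (3:ℕ) (deriv (deriv u)) := by
    have : ContDiff ℝ ((3:ℕ)+1 : WithTop ℕ∞) (deriv u) := by norm_num; exact_mod_cast hd1
    exact (contDiff_succ_iff_deriv.mp this).2.2
  have Du : Differentiable ℝ u := hu.differentiable (by norm_num)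
  have D1 : Differentiable ℝ (deriv u) := hd1.differentiable (by norm_num)
  have D2 : Differentiable ℝ (deriv (deriv u)) := hd2.differentiable (by norm_num)
  -- derivative identities for products
  have e1 : deriv (fun t => u t * u t) = fun t => deriv u t * u t + u t * deriv u t :=
    funext fun t => deriv_mul (Du t) (Du t)
  have e2 : deriv (fun t => deriv u t * u t + u t * deriv u t)
      = fun t => (deriv (deriv u) t * u t + deriv u t * deriv u t)
          + (deriv u t * deriv u t + u t * deriv (deriv u) t) :=
    funext fun t => by
      rw [deriv_fun_add (f := fun t => deriv u t * u t) (g := fun t => u t * deriv u t) ((D1 t).mul (Du t)) ((Du t).mul (D1 t)),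
        deriv_fun_mul (D1 t) (Du t), deriv_fun_mul (Du t) (D1 t)]
  have m1 : deriv (fun t => u t * u t) 0 = 2 * (u 0 * deriv u 0) := by
    rw [deriv_fun_mul (Du 0) (Du 0)]; ring
  have it3 : ∀ f : ℝ → ℝ, iteratedDeriv 3 f = deriv (deriv (deriv f)) := fun f => by
    rw [show (3:ℕ) = 2+1 from rfl, iteratedDeriv_succ, show (2:ℕ) = 1+1 from rfl,
      iteratedDeriv_succ, iteratedDeriv_one]
  have m3 : iteratedDeriv 3 (fun t => u t * u t) 0
      = 2 * (u 0 * deriv (deriv (deriv u)) 0) + 6 * (deriv u 0 * deriv (deriv u) 0) := by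
    rw [it3, e1, e2, deriv_fun_add
        (f := fun t => deriv (deriv u) t * u t + deriv u t * deriv u t)
        (g := fun t => deriv u t * deriv u t + u t * deriv (deriv u) t) (((D2 0).mul (Du 0)).add ((D1 0).mul (D1 0)))
        (((D1 0).mul (D1 0)).add ((Du 0).mul (D2 0))),
      deriv_fun_add (f := fun t => deriv (deriv u) t * u t) (g := fun t => deriv u t * deriv u t) ((D2 0).mul (Du 0)) ((D1 0).mul (D1 0)),
      deriv_fun_add (f := fun t => deriv u t * deriv u t) (g := fun t => u t * deriv (deriv u) t) ((D1 0).mul (D1 0)) ((Du 0).mul (D2 0)),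
      deriv_fun_mul (D2 0) (Du 0), deriv_fun_mul (D1 0) (D1 0), deriv_fun_mul (Du 0) (D2 0)]
    ring
  have q1 : deriv (fun t => deriv (deriv u) t * u t) 0
      = deriv (deriv (deriv u)) 0 * u 0 + deriv (deriv u) 0 * deriv u 0 :=
    deriv_mul (D2 0) (Du 0)
  -- big-O facts
  have hA := cd5 u hu
  rw [it3] at hA
  have hB := cd5 (fun t => u t * u t) (hu.mul hu)
  rw [it3] at hB
  have hB2 : (fun h : ℝ => (u h * u h - u (-h) * u (-h)) / (2*h) - 2 * (u 0 * deriv u 0)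
      - h^2/6 * (2 * (u 0 * deriv (deriv (deriv u)) 0) + 6 * (deriv u 0 * deriv (deriv u) 0)))
      =O[𝓝[>] (0:ℝ)] fun h => h ^ 4 := by
    rw [← it3] at hB
    simpa only [m1, m3] using hB
  have hC := cd3 (fun t => deriv (deriv u) t * u t) (hd2.mul (hu.of_le (by norm_num)))
  have hC2 : (fun h : ℝ => (deriv (deriv u) h * u h - deriv (deriv u) (-h) * u (-h)) / (2*h)
      - (deriv (deriv (deriv u)) 0 * u 0 + deriv (deriv u) 0 * deriv u 0))
      =O[𝓝[>] (0:ℝ)] fun h => h ^ 2 := by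
    simpa only [q1] using hC
  -- the algebraic identity
  set a := u 0
  set b := deriv u 0
  set c := deriv (deriv u) 0
  set d := deriv (deriv (deriv u)) 0
  have key : ∀ h : ℝ,
      a * b - 1/3 * (a * ((u h - u (-h)) / (2*h)) + (u h * u h - u (-h) * u (-h)) / (2*h))
        + h^2/2 * (1/3 * (c * ((u h - u (-h)) / (2*h))
            + (deriv (deriv u) h * u h - deriv (deriv u) (-h) * u (-h)) / (2*h)))
      = -(1/3) * (a * ((u h - u (-h)) / (2*h) - b - h^2/6 * d)
            + ((u h * u h - u (-h) * u (-h)) / (2*h) - 2 * (a * b)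
              - h^2/6 * (2 * (a * d) + 6 * (b * c))))
        + h^2/6 * (c * ((u h - u (-h)) / (2*h) - b - h^2/6 * d)
            + ((deriv (deriv u) h * u h - deriv (deriv u) (-h) * u (-h)) / (2*h) - (d * a + c * b)))
        + c * d / 36 * h^4 := fun h => by ring
  have T1 : (fun h : ℝ => -(1/3) * (a * ((u h - u (-h)) / (2*h) - b - h^2/6 * d)
      + ((u h * u h - u (-h) * u (-h)) / (2*h) - 2 * (a * b)
        - h^2/6 * (2 * (a * d) + 6 * (b * c)))))
      =O[𝓝[>] (0:ℝ)] fun h => h ^ 4 :=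
    ((hA.const_mul_left a).add hB2).const_mul_left (-(1/3))
  have T2 : (fun h : ℝ => h^2/6 * (c * ((u h - u (-h)) / (2*h) - b - h^2/6 * d)
      + ((deriv (deriv u) h * u h - deriv (deriv u) (-h) * u (-h)) / (2*h) - (d * a + c * b))))
      =O[𝓝[>] (0:ℝ)] fun h => h ^ 4 := by
    have inner : (fun h : ℝ => c * ((u h - u (-h)) / (2*h) - b - h^2/6 * d)
        + ((deriv (deriv u) h * u h - deriv (deriv u) (-h) * u (-h)) / (2*h) - (d * a + c * b)))
        =O[𝓝[>] (0:ℝ)] fun h => h ^ 2 :=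
      ((hA.trans (pow_isBigO_pow (by norm_num))).const_mul_left c).add hC2
    have := (isBigO_refl (fun h : ℝ => h^2/6) (𝓝[>] (0:ℝ))).mul inner
    refine this.trans ?_
    have : (fun h : ℝ => h^2/6 * h^2) = fun h : ℝ => 1/6 * h^4 := funext fun h => by ring
    rw [this]
    exact (isBigO_const_mul_self (1/6) _ _).trans (isBigO_refl _ _)
  have T3 : (fun h : ℝ => c * d / 36 * h^4) =O[𝓝[>] (0:ℝ)] fun h => h ^ 4 :=
    (isBigO_refl (fun h : ℝ => h^4) _).const_mul_left _
  exact ((T1.add T2).add T3).congr' (Filter.Eventually.of_forall fun h => (key h).symm)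
    (Filter.EventuallyEq.refl _ _)

lemma derivx (f : ℝ × ℝ → ℝ) (hf : Differentiable ℝ f) (x₀ y₀ t : ℝ) :
    deriv (fun s => f (x₀ + s, y₀)) t = partialx f (x₀ + t, y₀) := by
  have h1 : HasDerivAt (fun s : ℝ => ((x₀ + s : ℝ), y₀)) ((1:ℝ), (0:ℝ)) t := by
    simpa using ((hasDerivAt_id t).const_add x₀).prodMk (hasDerivAt_const t y₀)
  exact ((hf (x₀ + t, y₀)).hasFDerivAt.comp_hasDerivAt t h1).deriv

lemma derivy (f : ℝ × ℝ → ℝ) (hf : Differentiable ℝ f) (x₀ y₀ t : ℝ) :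
    deriv (fun s => f (x₀, y₀ + s)) t = partialy f (x₀, y₀ + t) := by
  have h1 : HasDerivAt (fun s : ℝ => (x₀, (y₀ + s : ℝ))) ((0:ℝ), (1:ℝ)) t := by
    simpa using (hasDerivAt_const t x₀).prodMk ((hasDerivAt_id t).const_add y₀)
  exact ((hf (x₀, y₀ + t)).hasFDerivAt.comp_hasDerivAt t h1).deriv

lemma contDiff_partialx {n : ℕ} {f : ℝ × ℝ → ℝ} (hf : ContDiff ℝ (n+1:ℕ) f) :
    ContDiff ℝ (n:ℕ) (partialx f) := by
  have : ContDiff ℝ (n:ℕ) (fderiv ℝ f) := hf.fderiv_right (by exact_mod_cast le_rfl)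
  exact this.clm_apply contDiff_const

lemma contDiff_partialy {n : ℕ} {f : ℝ × ℝ → ℝ} (hf : ContDiff ℝ (n+1:ℕ) f) :
    ContDiff ℝ (n:ℕ) (partialy f) := by
  have : ContDiff ℝ (n:ℕ) (fderiv ℝ f) := hf.fderiv_right (by exact_mod_cast le_rfl)
  exact this.clm_apply contDiff_const


/-- Fourth-order compact approximation of the nonlinear convection term
`g (gₓ + g_y)` at `(x₀, y₀)`:
`g(gₓ+g_y) - ψₕ(g,g) + (h²/2)(ψₓ(G,g) + ψ_y(H,g)) = O(h⁴)` as `h → 0⁺`,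
where `G = gₓₓ`, `H = g_yy`. -/
theorem compact_convection_fourth_order
    (g : ℝ × ℝ → ℝ) (hg : ContDiff ℝ 5 g) (x₀ y₀ : ℝ) :
    (fun h : ℝ =>
        g (x₀, y₀) * (partialx g (x₀, y₀) + partialy g (x₀, y₀))
          - (1 / 3) * (g (x₀, y₀) * cdh x₀ y₀ h g + cdh x₀ y₀ h (fun p => g p * g p))
          + h ^ 2 / 2 *
              ((1 / 3) * (partialx (partialx g) (x₀, y₀) * cdx x₀ y₀ h g
                  + cdx x₀ y₀ h (fun p => partialx (partialx g) p * g p))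
                + (1 / 3) * (partialy (partialy g) (x₀, y₀) * cdy x₀ y₀ h g
                    + cdy x₀ y₀ h (fun p => partialy (partialy g) p * g p))))
      =O[nhdsWithin 0 (Set.Ioi 0)] (fun h : ℝ => h ^ 4) := by
  have hg5 : ContDiff ℝ (5:ℕ) g := by exact_mod_cast hg
  have dg : Differentiable ℝ g := hg5.differentiable (by norm_num)
  have hpx : ContDiff ℝ (4:ℕ) (partialx g) := contDiff_partialx (by exact_mod_cast hg5)
  have hpy : ContDiff ℝ (4:ℕ) (partialy g) := contDiff_partialy (by exact_mod_cast hg5)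
  have dpx : Differentiable ℝ (partialx g) := hpx.differentiable (by norm_num)
  have dpy : Differentiable ℝ (partialy g) := hpy.differentiable (by norm_num)
  have hu : ContDiff ℝ (5:ℕ) (fun t : ℝ => g (x₀ + t, y₀)) :=
    hg5.comp ((contDiff_const.add contDiff_id).prodMk contDiff_const)
  have hv : ContDiff ℝ (5:ℕ) (fun t : ℝ => g (x₀, y₀ + t)) :=
    hg5.comp (contDiff_const.prodMk (contDiff_const.add contDiff_id))
  have du : deriv (fun s : ℝ => g (x₀ + s, y₀)) = fun t => partialx g (x₀ + t, y₀) :=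
    funext (derivx g dg x₀ y₀)
  have ddu : deriv (deriv (fun s : ℝ => g (x₀ + s, y₀)))
      = fun t => partialx (partialx g) (x₀ + t, y₀) := by
    rw [du]; exact funext (derivx (partialx g) dpx x₀ y₀)
  have dv : deriv (fun s : ℝ => g (x₀, y₀ + s)) = fun t => partialy g (x₀, y₀ + t) :=
    funext (derivy g dg x₀ y₀)
  have ddv : deriv (deriv (fun s : ℝ => g (x₀, y₀ + s)))
      = fun t => partialy (partialy g) (x₀, y₀ + t) := by
    rw [dv]; exact funext (derivy (partialy g) dpy x₀ y₀)
  have main := (onedim (fun t : ℝ => g (x₀ + t, y₀)) hu).add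
    (onedim (fun t : ℝ => g (x₀, y₀ + t)) hv)
  refine main.congr' (Filter.Eventually.of_forall fun h => ?_) (Filter.EventuallyEq.refl _ _)
  simp only [ddu, ddv]
  simp only [du, dv, cdh, cdx, cdy, add_zero, ← sub_eq_add_neg]
  ring
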